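/- arXiv:2002.06764 — 2 statements merged into one kernel-verified Lean document; each statement's English description precedes it below -/
import Mathlib

section
/- Let ≈ be an SCER. If C is a ≈-cover of T and C' is a ≈-cover of C, then C' is a ≈-cover of T (transitivity of the ≈-cover relation). -/
variable {α : Type*}

/-- `substr X i j` is the 1-indexed inclusive substring `X[i:j]`. -/
def substr (X : List α) (i j : ℕ) : List α := (X.take j).drop (i - 1)

/-- A substring consistent equivalence relation (SCER). -/
structure SCER (r : List α → List α → Prop) : Prop where
  equiv : Equivalence r
  length_eq : ∀ X Y, r X Y → X.length = Y.length
  substr_congr : ∀ X Y, r X Y → ∀ i j, 1 ≤ i → i ≤ j → j ≤ X.length →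
    r (substr X i j) (substr Y i j)

/-- `B` is a `≈`-border of `T`: `B` is equivalent to a prefix and a suffix of `T`. -/
def IsBorder (r : List α → List α → Prop) (B T : List α) : Prop :=
  B.length ≤ T.length ∧ r B (T.take B.length) ∧ r B (T.drop (T.length - B.length))

/-- `C` is a `≈`-cover of `T`: there are occurrences `x 1 = 1 < ... < x m = |T|-|C|+1`
with consecutive gaps at most `|C|`. -/
def IsCover (r : List α → List α → Prop) (C T : List α) : Prop :=
  ∃ (m : ℕ) (x : ℕ → ℕ), 1 ≤ m ∧ x 1 = 1 ∧ x m = T.length - C.length + 1 ∧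
    (∀ k, 1 ≤ k → k ≤ m → r C (substr T (x k) (x k + C.length - 1))) ∧
    (∀ k, 1 < k → k ≤ m → x (k - 1) < x k ∧ x k ≤ x (k - 1) + C.length)

def IsProperCover (r : List α → List α → Prop) (C T : List α) : Prop :=
  IsCover r C T ∧ C.length < T.length

/-- A string is primitive if it has no proper `≈`-cover. -/
def Primitive (r : List α → List α → Prop) (T : List α) : Prop :=
  ¬ ∃ C : List α, IsProperCover r C T

/-- `S` is a left `≈`-seed of `T`. -/
def IsLeftSeed (r : List α → List α → Prop) (S T : List α) : Prop :=
  ∃ k l, k ≤ l ∧ l < S.length ∧ IsCover r S (T.take (T.length - k)) ∧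
    r (S.take l) (T.drop (T.length - l))

/-- `Bd` is the `≈`-border array of `T`:
`Bd i` is the maximum length of a proper `≈`-border of `T[1:i]`. -/
def BorderArr (r : List α → List α → Prop) (T : List α) (Bd : ℕ → ℕ) : Prop :=
  ∀ i, 1 ≤ i → i ≤ T.length →
    IsGreatest {b | ∃ B : List α, B.length = b ∧ b < i ∧ IsBorder r B (T.take i)} (Bd i)

/-- `L` is the longest `≈`-cover array of `T`:
`L i = max({|C| : C proper ≈-cover of T[1:i]} ∪ {0})`. -/
def LCoverArr (r : List α → List α → Prop) (T : List α) (L : ℕ → ℕ) : Prop :=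
  ∀ i, 1 ≤ i → i ≤ T.length →
    IsGreatest (insert 0 {c | ∃ C : List α, C.length = c ∧ IsProperCover r C (T.take i)})
      (L i)

/-!
If `C` occurs at `x` in `T` and `C'` occurs at `y` in `C`, then `C'` occurs at `x + y - 1` in `T`.
So each occurrence `x` of `C` in a cover of `T` carries a copy of the chain of occurrences of `C'`
covering `C`, shifted to run from `x` to `x + |C| - |C'|`. Consecutive occurrences of `C` are at
most `|C|` apart, so the next shifted chain starts no later than `|C'|` past the end of the current
one, and the shifted chains merge into a single chain of occurrences of `C'` in `T` from `1` to
`|T| - |C'| + 1` with gaps at most `|C'|`.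
-/

def OccursAt (r : List α → List α → Prop) (C T : List α) (x : ℕ) : Prop :=
  r C (substr T x (x + C.length - 1))

inductive StepChain (P : ℕ → Prop) (c : ℕ) : ℕ → ℕ → Prop
  | single {a : ℕ} : P a → StepChain P c a a
  | cons {a b d : ℕ} : P a → a < b → b ≤ a + c → StepChain P c b d → StepChain P c a d

namespace StepChain

variable {P Q R : ℕ → Prop} {c : ℕ}

theorem of_seq {m : ℕ} {x : ℕ → ℕ} (hP : ∀ k, 1 ≤ k → k ≤ m → P (x k))
    (hgap : ∀ k, 1 < k → k ≤ m → x (k - 1) < x k ∧ x k ≤ x (k - 1) + c) {k : ℕ} (hk : 1 ≤ k)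
    (hkm : k ≤ m) : StepChain P c (x k) (x m) := by
  induction hd : m - k generalizing k with
  | zero =>
    obtain rfl : k = m := by omega
    exact .single (hP k hk hkm)
  | succ n ih =>
    have hstep := hgap (k + 1) (by omega) (by omega)
    rw [Nat.add_sub_cancel] at hstep
    exact .cons (hP k hk hkm) hstep.1 hstep.2 (ih (by omega) (by omega) (by omega))

theorem exists_seq {a b : ℕ} (hch : StepChain P c a b) :
    ∃ (m : ℕ) (x : ℕ → ℕ), 1 ≤ m ∧ x 1 = a ∧ x m = b ∧ (∀ k, 1 ≤ k → k ≤ m → P (x k)) ∧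
      (∀ k, 1 < k → k ≤ m → x (k - 1) < x k ∧ x k ≤ x (k - 1) + c) := by
  induction hch with
  | @single a hPa => exact ⟨1, fun _ => a, le_rfl, rfl, rfl, fun _ _ _ => hPa, by omega⟩
  | @cons a b d hPa hab hbc _ ih =>
    obtain ⟨m, x, hm, hx1, hxm, hP, hgap⟩ := ih
    refine ⟨m + 1, fun k => if k ≤ 1 then a else x (k - 1), by omega, by simp, ?_, ?_, ?_⟩
    · simp [show ¬ m + 1 ≤ 1 by omega, hxm]
    · intro k hk hkm
      dsimp only
      split_ifs
      · exact hPa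
      · exact hP (k - 1) (by omega) (by omega)
    · intro k hk hkm
      by_cases hk2 : k = 2
      · subst hk2
        simpa [hx1] using ⟨hab, hbc⟩
      · simpa [show ¬ k ≤ 1 by omega, show ¬ k - 1 ≤ 1 by omega, Nat.sub_right_comm k 1 1]
          using hgap (k - 1) (by omega) (by omega)

theorem shift {a b : ℕ} (hQ : StepChain Q c a b) (s : ℕ) (hR : ∀ y, a ≤ y → Q y → R (y + s)) :
    StepChain R c (a + s) (b + s) := by
  induction hQ with
  | single hQa => exact .single (hR _ le_rfl hQa)
  | cons hQa hab hbc _ ih =>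
    exact .cons (hR _ le_rfl hQa) (by omega) (by omega) (ih fun y hy => hR y (by omega))

theorem merge {a b a' b' : ℕ} (h₁ : StepChain P c a b) (h₂ : StepChain P c a' b') (ha : a < a')
    (hb : a' ≤ b + c) : StepChain P c a b' := by
  induction h₁ with
  | single hPa => exact .cons hPa ha hb h₂
  | @cons a b₁ d hPa hab hbc _ ih =>
    by_cases hb₁ : b₁ < a'
    · exact .cons hPa hab hbc (ih hb₁ hb)
    · exact .cons hPa ha (by omega) h₂

theorem bind {c' a b e : ℕ} (hP : StepChain P c a b) (ha : 1 ≤ a) (hQ : StepChain Q c' 1 e)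
    (hce : c + 1 ≤ e + c') (hR : ∀ x y, 1 ≤ x → 1 ≤ y → P x → Q y → R (x + y - 1)) :
    StepChain R c' a (b + e - 1) := by
  have hcopy : ∀ {x}, 1 ≤ x → P x → StepChain R c' x (x + e - 1) := fun {x} hx hPx => by
    have := hQ.shift (x - 1) fun y hy hQy => by
      convert hR x y hx hy hPx hQy using 1
      omega
    convert this using 1 <;> omega
  induction hP with
  | single hPa => exact hcopy ha hPa
  | cons hPa hab hbc _ ih => exact (hcopy ha hPa).merge (ih (by omega)) hab (by omega)

end StepChain

section

variable {r : List α → List α → Prop} {C C' T : List α}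

theorem isCover_iff_stepChain :
    IsCover r C T ↔ StepChain (OccursAt r C T) C.length 1 (T.length - C.length + 1) := by
  constructor
  · rintro ⟨m, x, hm, hx1, hxm, hP, hgap⟩
    simpa only [hx1, hxm] using StepChain.of_seq hP hgap le_rfl hm
  · exact StepChain.exists_seq

theorem substr_substr (T : List α) {a b i j : ℕ} (ha : 1 ≤ a) (hi : 1 ≤ i) (hj : a - 1 + j ≤ b) :
    substr (substr T a b) i j = substr T (a + i - 1) (a + j - 1) := by
  unfold substr
  rw [List.take_drop, List.take_take, Nat.min_eq_left hj, List.drop_drop]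
  congr 2 <;> omega

theorem SCER.length_le_of_isCover (h : SCER r) (hC : IsCover r C T) : C.length ≤ T.length := by
  obtain ⟨m, x, hm, hx1, -, hocc, -⟩ := hC
  have hlen := h.length_eq _ _ (hocc 1 le_rfl hm)
  simp only [hx1, substr, List.length_drop, List.length_take] at hlen
  omega

theorem SCER.occursAt_trans (h : SCER r) {x y : ℕ} (hx : 1 ≤ x) (hy : 1 ≤ y)
    (hC : OccursAt r C T x) (hC' : OccursAt r C' C y) : OccursAt r C' T (x + y - 1) := by
  unfold OccursAt at *
  rcases Nat.eq_zero_or_pos C'.length with h0 | hpos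
  · -- `substr X y (y - 1) = []`, and `substr_congr` does not apply to an empty range
    simpa [substr, h0] using hC'
  · have hlen := h.length_eq _ _ hC'
    simp only [substr, List.length_drop, List.length_take] at hlen
    have hsub := h.substr_congr _ _ hC y (y + C'.length - 1) hy (by omega) (by omega)
    rw [substr_substr T hx hy (by omega)] at hsub
    convert h.equiv.trans hC' hsub using 3
    omega

end

theorem stmt8 (r : List α → List α → Prop) (h : SCER r) (T C C' : List α)
    (hC : IsCover r C T) (hC' : IsCover r C' C) : IsCover r C' T := by
  have hCT := h.length_le_of_isCover hC
  have hC'C := h.length_le_of_isCover hC'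
  rw [isCover_iff_stepChain] at hC hC' ⊢
  have hchain := hC.bind le_rfl hC' (by omega) fun _ _ hx hy => h.occursAt_trans hx hy
  convert hchain using 1
  omega
end

section
/- Let ≈ be an SCER. A ≈-cover C of T is primitive (has no proper ≈-cover) if and only if C is a shortest ≈-cover of T. Consequently, any two primitive ≈-covers of T are ≈-equivalent. -/
variable {α : Type*}

/-!
`C` is a `≈`-cover of `T` exactly when `|C| ≤ |T|` and the `≈`-occurrences of `C` cover every
position of `T`. In this positional form, covers compose (an occurrence of `u` inside an
occurrence of `v` is an occurrence of `u` in `T`, by substring consistency), and a shorter cover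
`u` of `T` covers a longer one `v`, since `v` is equivalent to both the prefix and the suffix of
`T` of its length. Hence a proper cover of `C` is a shorter cover of `T`, and a shorter cover of
`T` is a proper cover of `C`; two shortest covers have equal length and one covers the other,
which for equal lengths means they are equivalent.
-/

lemma substr_substr_s9 (T : List α) {z y a L : ℕ} (hz : 1 ≤ z) (hy : 1 ≤ y) (ha : 1 ≤ a)
    (hyL : y + a - 1 ≤ L) :
    substr (substr T z (z + L - 1)) y (y + a - 1) = substr T (z + y - 1) (z + y - 1 + a - 1) := by
  simp only [substr, List.take_drop, List.drop_drop, List.take_take]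
  congr 1
  · omega
  · congr 1
    omega

lemma exists_chain_of_exists_step (P : ℕ → Prop) (a q : ℕ) (hPq : ∀ p, P p → p ≤ q)
    (hstep : ∀ p, P p → p < q → ∃ p', P p' ∧ p < p' ∧ p' ≤ p + a) {p : ℕ} (hp : P p) :
    ∃ (m : ℕ) (x : ℕ → ℕ), 1 ≤ m ∧ x 1 = p ∧ x m = q ∧ (∀ k, 1 ≤ k → k ≤ m → P (x k)) ∧
      (∀ k, 1 < k → k ≤ m → x (k - 1) < x k ∧ x k ≤ x (k - 1) + a) := by
  induction hn : q - p using Nat.strong_induction_on generalizing p with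
  | _ n ih =>
    obtain hpq | hpq := (hPq p hp).lt_or_eq
    · obtain ⟨p', hp', hpp', hp'a⟩ := hstep p hp hpq
      obtain ⟨m, x, hm, hx1, hxm, hxP, hgap⟩ := ih (q - p') (by omega) hp' rfl
      refine ⟨m + 1, fun k => if k ≤ 1 then p else x (k - 1), by omega, by simp, ?_, ?_, ?_⟩
      · simpa [show ¬m + 1 ≤ 1 by omega] using hxm
      · intro k _ _
        dsimp only
        split_ifs
        exacts [hp, hxP (k - 1) (by omega) (by omega)]
      · intro k hk hkm
        obtain rfl | hk2 := (show 2 ≤ k by omega).eq_or_lt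
        · simpa [hx1] using ⟨hpp', hp'a⟩
        · simpa [show ¬k ≤ 1 by omega, show ¬k - 1 ≤ 1 by omega, show k - 1 - 1 = k - 2 by omega]
            using hgap (k - 1) (by omega) (by omega)
    · exact ⟨1, fun _ => p, le_rfl, rfl, hpq, fun _ _ _ => hp, fun k _ _ => by omega⟩

lemma chain_mono {m : ℕ} {x : ℕ → ℕ} (hx : ∀ k, 1 < k → k ≤ m → x (k - 1) < x k) {j k : ℕ}
    (hj : 1 ≤ j) (hjk : j ≤ k) (hkm : k ≤ m) : x j ≤ x k := by
  induction k, hjk using Nat.le_induction with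
  | base => rfl
  | succ k hjk ih => exact (ih (by omega)).trans (by simpa using (hx (k + 1) (by omega) hkm).le)

variable {r : List α → List α → Prop}

def IsOccAt (r : List α → List α → Prop) (C T : List α) (p : ℕ) : Prop :=
  1 ≤ p ∧ p + C.length ≤ T.length + 1 ∧ r C (substr T p (p + C.length - 1))

def CoversPositions (r : List α → List α → Prop) (C T : List α) : Prop :=
  ∀ i, 1 ≤ i → i ≤ T.length → ∃ p, IsOccAt r C T p ∧ p ≤ i ∧ i < p + C.length

lemma isOccAt_iff_of_isOccAt (h : SCER r) {u v T : List α} {z y : ℕ} (hv : IsOccAt r v T z)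
    (hu : 1 ≤ u.length) (hy : 1 ≤ y) (hyv : y + u.length ≤ v.length + 1) :
    IsOccAt r u v y ↔ IsOccAt r u T (z + y - 1) := by
  obtain ⟨hz, hzT, hvT⟩ := hv
  have key : r (substr v y (y + u.length - 1)) (substr T (z + y - 1) (z + y - 1 + u.length - 1)) :=
    substr_substr_s9 T (L := v.length) hz hy hu (by omega) ▸
      h.substr_congr _ _ hvT y (y + u.length - 1) hy (by omega) (by omega)
  constructor
  · rintro ⟨-, -, huv⟩
    exact ⟨by omega, by omega, h.equiv.trans huv key⟩
  · rintro ⟨-, -, huT⟩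
    exact ⟨hy, hyv, h.equiv.trans huT (h.equiv.symm key)⟩

lemma IsCover.length_le (h : SCER r) {C T : List α} (hC : IsCover r C T) :
    C.length ≤ T.length := by
  obtain ⟨m, x, hm, hx1, -, hocc, -⟩ := hC
  have := h.length_eq _ _ (hocc 1 le_rfl hm)
  simp only [substr, hx1, List.length_drop, List.length_take] at this
  omega

lemma IsCover.coversPositions (h : SCER r) {C T : List α} (hC : IsCover r C T) :
    CoversPositions r C T := by
  have hle := hC.length_le h
  obtain ⟨m, x, hm, hx1, hxm, hocc, hgap⟩ := hC
  have hmono {j k : ℕ} (hj : 1 ≤ j) (hjk : j ≤ k) (hkm : k ≤ m) : x j ≤ x k :=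
    chain_mono (fun k hk hkm => (hgap k hk hkm).1) hj hjk hkm
  intro i hi hiT
  classical
  set K := Nat.findGreatest (fun k => x k ≤ i) m
  have hK1 : 1 ≤ K := Nat.le_findGreatest hm (by omega)
  have hKm : K ≤ m := Nat.findGreatest_le m
  have hKi : x K ≤ i := Nat.findGreatest_spec (P := fun k => x k ≤ i) hm (by omega)
  have hxK1 : 1 ≤ x K := hx1 ▸ hmono le_rfl hK1 hKm
  have hxKm : x K ≤ x m := hmono hK1 hKm le_rfl
  refine ⟨x K, ⟨hxK1, by omega, hocc K hK1 hKm⟩, hKi, ?_⟩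
  obtain hKeq | hKlt := hKm.eq_or_lt
  · rw [hKeq, hxm]
    omega
  · have hnext : ¬x (K + 1) ≤ i :=
      Nat.findGreatest_is_greatest (P := fun k => x k ≤ i) (lt_add_one K) hKlt
    have := (hgap (K + 1) (by omega) hKlt).2
    simp only [Nat.add_sub_cancel] at this
    omega

lemma CoversPositions.isOccAt_one {C T : List α} (hc : CoversPositions r C T)
    (hT : T ≠ []) : IsOccAt r C T 1 := by
  obtain ⟨p, hp, hp1, -⟩ := hc 1 le_rfl (List.length_pos_iff.mpr hT)
  obtain rfl : p = 1 := by have := hp.1; omega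
  exact hp

lemma CoversPositions.isOccAt_last {C T : List α} (hc : CoversPositions r C T)
    (hT : T ≠ []) : IsOccAt r C T (T.length - C.length + 1) := by
  obtain ⟨p, hp, -, hpT⟩ := hc T.length (List.length_pos_iff.mpr hT) le_rfl
  obtain rfl : p = T.length - C.length + 1 := by have := hp.1; have := hp.2.1; omega
  exact hp

lemma CoversPositions.isCover (h : SCER r) {C T : List α} (hc : CoversPositions r C T)
    (hle : C.length ≤ T.length) : IsCover r C T := by
  rcases eq_or_ne T [] with rfl | hT
  · obtain rfl : C = [] := List.eq_nil_of_length_eq_zero (Nat.le_zero.mp hle)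
    exact ⟨1, fun _ => 1, le_rfl, rfl, rfl, fun _ _ _ => h.equiv.refl _, fun k _ _ => by omega⟩
  have hstep (p : ℕ) (hp : IsOccAt r C T p) (hpq : p < T.length - C.length + 1) :
      ∃ p', IsOccAt r C T p' ∧ p < p' ∧ p' ≤ p + C.length := by
    have := hp.1
    obtain ⟨p', hp', hp'i, hip'⟩ := hc (p + C.length) (by omega) (by omega)
    exact ⟨p', hp', by omega, hp'i⟩
  obtain ⟨m, x, hm, hx1, hxm, hocc, hgap⟩ := exists_chain_of_exists_step (IsOccAt r C T)
    C.length _ (fun p hp => by have := hp.2.1; omega) hstep (hc.isOccAt_one hT)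
  exact ⟨m, x, hm, hx1, hxm, fun k hk hkm => (hocc k hk hkm).2.2, hgap⟩

lemma isCover_iff_coversPositions (h : SCER r) {C T : List α} :
    IsCover r C T ↔ CoversPositions r C T ∧ C.length ≤ T.length :=
  ⟨fun hC => ⟨hC.coversPositions h, hC.length_le h⟩, fun hc => hc.1.isCover h hc.2⟩

lemma CoversPositions.trans (h : SCER r) {u v T : List α} (huv : CoversPositions r u v)
    (hvT : CoversPositions r v T) : CoversPositions r u T := by
  intro i hi hiT
  obtain ⟨z, hz, hzi, hiz⟩ := hvT i hi hiT
  obtain ⟨y, hy, hyi, hiy⟩ := huv (i - z + 1) (by omega) (by have := hz.1; omega)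
  refine ⟨z + y - 1, ?_, by omega, by omega⟩
  exact (isOccAt_iff_of_isOccAt h hz (by omega) hy.1 hy.2.1).mp hy

lemma IsCover.trans (h : SCER r) {u v T : List α} (huv : IsCover r u v) (hvT : IsCover r v T) :
    IsCover r u T :=
  ((huv.coversPositions h).trans h (hvT.coversPositions h)).isCover h
    ((huv.length_le h).trans (hvT.length_le h))

lemma IsCover.of_length_le (h : SCER r) {u v T : List α} (hu : IsCover r u T)
    (hv : IsCover r v T) (huv : u.length ≤ v.length) : IsCover r u v := by
  rw [isCover_iff_coversPositions h] at hu hv ⊢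
  refine ⟨fun i hi hiv => ?_, huv⟩
  have hT : T ≠ [] := List.ne_nil_of_length_pos (by omega)
  obtain ⟨p, hp, hpi, hip⟩ := hu.1 i hi (by omega)
  by_cases hpv : p + u.length ≤ v.length + 1
  · refine ⟨p, ?_, hpi, hip⟩
    rw [isOccAt_iff_of_isOccAt h (hv.1.isOccAt_one hT) (by omega) hp.1 hpv]
    simpa using hp
  · refine ⟨v.length - u.length + 1, ?_, by omega, by omega⟩
    rw [isOccAt_iff_of_isOccAt h (hv.1.isOccAt_last hT) (by omega) (by omega) (by omega)]
    convert hu.1.isOccAt_last hT using 1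
    omega

lemma IsCover.rel_of_length_eq {u v : List α} (huv : IsCover r u v)
    (hl : u.length = v.length) : r u v := by
  obtain ⟨m, x, hm, hx1, -, hocc, -⟩ := huv
  simpa [substr, hx1, hl] using hocc 1 le_rfl hm

lemma primitive_iff_forall_length_le (h : SCER r) {C T : List α} (hC : IsCover r C T) :
    Primitive r C ↔ ∀ C' : List α, IsCover r C' T → C.length ≤ C'.length := by
  refine ⟨fun hprim C' hC' => ?_, fun hmin ⟨D, hD, hDC⟩ => ?_⟩
  · by_contra! hlt
    exact hprim ⟨C', hC'.of_length_le h hC hlt.le, hlt⟩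
  · exact (hmin D (hD.trans h hC)).not_gt hDC

theorem stmt9 (r : List α → List α → Prop) (h : SCER r) (T C : List α)
    (hC : IsCover r C T) :
    (Primitive r C ↔ ∀ C' : List α, IsCover r C' T → C.length ≤ C'.length) ∧
    (∀ C' : List α, IsCover r C' T → Primitive r C → Primitive r C' → r C C') := by
  refine ⟨primitive_iff_forall_length_le h hC, fun C' hC' hprim hprim' => ?_⟩
  have hle := (primitive_iff_forall_length_le h hC).mp hprim C' hC'
  have hge := (primitive_iff_forall_length_le h hC').mp hprim' C hC
  exact (hC.of_length_le h hC' hle).rel_of_length_eq (hle.antisymm hge)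
end
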